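/- arXiv:2402.02748 — 3 statements merged into one kernel-verified Lean document; each statement's English description precedes it below -/
import Mathlib

section
/- If ζ ∈ ℂ is a root of the polynomial λ⁴ + λ³ + (1/4)λ² + λ + 1, then ζ is not a root of unity. -/
/-! If `ζ` were a root of unity, then `ζ` and `ζ⁻¹` would be algebraic integers, hence so would
`w = ζ + ζ⁻¹`. Dividing the equation by `ζ²` shows `w (w + 1) = 7/4`, so the non-integral rational
`7/4` would be an algebraic integer. -/

theorem isIntegral_of_pow_eq_one {R A : Type*} [CommRing R] [Ring A] [Algebra R A] {x : A} {n : ℕ}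
    (hn : 0 < n) (hx : x ^ n = 1) : IsIntegral R x :=
  IsIntegral.of_pow hn (hx ▸ isIntegral_one)

theorem add_inv_mul_add_inv_add_one_eq {K : Type*} [Field K] [CharZero K] {ζ : K} (hζ : ζ ≠ 0)
    (h : ζ ^ 4 + ζ ^ 3 + ζ ^ 2 / 4 + ζ + 1 = 0) :
    (ζ + ζ⁻¹) * (ζ + ζ⁻¹ + 1) = 7 / 4 := by
  field_simp
  linear_combination 4 * h

theorem not_isIntegral_seven_fourths {K : Type*} [DivisionRing K] [CharZero K] :
    ¬ IsIntegral ℤ (7 / 4 : K) := by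
  intro hint
  obtain ⟨k, hk⟩ := (IsIntegral.exists_int_iff_exists_rat hint).mp ⟨7 / 4, by norm_num⟩
  have : (4 * k : K) = 7 := by rw [← hk]; norm_num
  have : 4 * k = 7 := by exact_mod_cast this
  omega

/-- A root of `λ⁴ + (1)λ³ + (1/4)λ² + (1)λ + 1` is not a root of unity. -/
theorem not_root_of_unity_12 (ζ : ℂ)
    (h : ζ ^ 4 + (1) * ζ ^ 3 + (1/4) * ζ ^ 2 + (1) * ζ + 1 = 0) :
    ∀ n : ℕ, 0 < n → ζ ^ n ≠ 1 := by
  intro n hn hζn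
  have hζ : ζ ≠ 0 := (IsUnit.of_pow_eq_one hζn hn.ne').ne_zero
  have hw : IsIntegral ℤ (ζ + ζ⁻¹) :=
    (isIntegral_of_pow_eq_one hn hζn).add
      (isIntegral_of_pow_eq_one hn (by rw [inv_pow, hζn, inv_one]))
  have hw' := hw.mul (hw.add isIntegral_one)
  rw [add_inv_mul_add_inv_add_one_eq hζ (by linear_combination h)] at hw'
  exact not_isIntegral_seven_fourths hw'
end

section
/- If ζ ∈ ℂ is a root of the polynomial λ⁴ + 3λ³ + (37/9)λ² + 3λ + 1, then ζ is not a root of unity. -/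
/-!
If `ζ` were a root of unity, then `ζ` and `ζ⁻¹` would be algebraic integers, hence so would
`x = ζ + ζ⁻¹`. Dividing the palindromic equation by `ζ²` gives `x² + 3x + 19/9 = 0`, so the
non-integral rational `19/9 = -x(x + 3)` would be an algebraic integer.
-/

lemma isIntegral_of_pow_eq_one_s14 {R : Type*} [CommRing R] {ζ : R} {n : ℕ} (hn : 0 < n)
    (hζ : ζ ^ n = 1) : IsIntegral ℤ ζ :=
  IsIntegral.of_pow hn (hζ ▸ isIntegral_one)

lemma isIntegral_add_inv_of_pow_eq_one {K : Type*} [Field K] {ζ : K} {n : ℕ} (hn : 0 < n)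
    (hζ : ζ ^ n = 1) : IsIntegral ℤ (ζ + ζ⁻¹) :=
  (isIntegral_of_pow_eq_one_s14 hn hζ).add
    (isIntegral_of_pow_eq_one_s14 hn (by rw [inv_pow, hζ, inv_one]))

lemma not_isIntegral_ratCast {K : Type*} [Field K] [CharZero K] {q : ℚ} (hq : q.den ≠ 1) :
    ¬ IsIntegral ℤ (q : K) := by
  intro hint
  rw [← eq_ratCast (algebraMap ℚ K), isIntegral_algebraMap_iff (algebraMap ℚ K).injective,
    IsIntegrallyClosed.isIntegral_iff] at hint
  obtain ⟨m, hm⟩ := hint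
  exact hq (by simp [← hm])

/-- A root of `λ⁴ + (3)λ³ + (37/9)λ² + (3)λ + 1` is not a root of unity. -/
theorem not_root_of_unity_14 (ζ : ℂ)
    (h : ζ ^ 4 + (3) * ζ ^ 3 + (37/9) * ζ ^ 2 + (3) * ζ + 1 = 0) :
    ∀ n : ℕ, 0 < n → ζ ^ n ≠ 1 := by
  intro n hn hζn
  have hζ0 : ζ ≠ 0 := by
    rintro rfl
    norm_num at h
  set x := ζ + ζ⁻¹ with hx_def
  have hx : x ^ 2 + 3 * x + 19 / 9 = 0 := by
    rw [hx_def]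
    field_simp
    linear_combination 9 * h
  have hxint : IsIntegral ℤ x := isIntegral_add_inv_of_pow_eq_one hn hζn
  have hrat : ((19 / 9 : ℚ) : ℂ) = -(x * (x + (3 : ℕ))) := by
    push_cast
    linear_combination hx
  refine not_isIntegral_ratCast (K := ℂ) (q := 19 / 9) (by norm_num) ?_
  rw [hrat]
  exact (hxint.mul (hxint.add (isIntegral_natCast 3))).neg
end

section
/- Let n > 2 be a prime and let ζ ∈ ℂ satisfy ζ² + (1 − cos(2π/n))ζ + 1 = 0. Then ζ is not a root of unity; equivalently, writing ζ = exp(iψπ), the number ψ is irrational. -/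
/-!
If `ζ` were a root of unity, `cos (2π/n) = ζ + ζ⁻¹ + 1` would be an algebraic integer. But with
`u = exp (2πi/n)` we have `cos (2π/n) = (u + u⁻¹)/2 = (1 + u²)/(2u)`, and for odd `n = 2k + 1`
the element `1 + u²` is a unit of `ℤ[u]`, with inverse `∑_{j ≤ k} u^{4j}` (a geometric series
summing to `∑_{i ≤ 2k+1} u^{2i} = 1`). Hence `1/2` would be an algebraic integer.
-/

open Complex Finset

theorem one_add_mul_geom_sum_sq_eq_one {R : Type*} [CommRing R] [IsDomain R] {w : R} {k : ℕ}
    (hw : w ^ (2 * k + 1) = 1) (hw1 : w ≠ 1) :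
    (1 + w) * ∑ j ∈ range (k + 1), (w ^ 2) ^ j = 1 := by
  refine mul_left_cancel₀ (sub_ne_zero.mpr hw1.symm) ?_
  calc (1 - w) * ((1 + w) * ∑ j ∈ range (k + 1), (w ^ 2) ^ j)
      = (1 - w ^ 2) * ∑ j ∈ range (k + 1), (w ^ 2) ^ j := by ring
    _ = 1 - w ^ (2 * k + 1) * w := by rw [mul_neg_geom_sum, ← pow_mul]; ring
    _ = (1 - w) * 1 := by rw [hw]; ring

theorem not_isIntegral_inv_two (K : Type*) [Field K] [CharZero K] : ¬ IsIntegral ℤ (2⁻¹ : K) := by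
  intro h
  rw [← Rat.cast_ofNat, ← Rat.cast_inv, IsIntegral.ratCast_iff] at h
  obtain ⟨k, hk⟩ := IsIntegrallyClosed.algebraMap_eq_of_integral h
  rw [algebraMap_int_eq, eq_intCast] at hk
  have : ((2 * k : ℤ) : ℚ) = 1 := by push_cast; rw [hk]; norm_num
  norm_cast at this
  omega

theorem IsPrimitiveRoot.not_isIntegral_add_inv_div_two {K : Type*} [Field K] [CharZero K]
    {u : K} {n : ℕ} (hu : IsPrimitiveRoot u n) (hodd : Odd n) (hn : 1 < n) :
    ¬ IsIntegral ℤ ((u + u⁻¹) / 2) := by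
  intro hx
  obtain ⟨k, rfl⟩ := hodd
  have hu0 : u ≠ 0 := hu.ne_zero (by omega)
  have hu_int : IsIntegral ℤ u := hu.isIntegral (by omega)
  have hS := one_add_mul_geom_sum_sq_eq_one (w := u ^ 2)
    (by rw [← pow_mul, mul_comm, pow_mul, hu.pow_eq_one, one_pow])
    (hu.pow_ne_one_of_pos_of_lt two_ne_zero (by omega))
  set S := ∑ j ∈ range (k + 1), ((u ^ 2) ^ 2) ^ j
  have hS_int : IsIntegral ℤ S := IsIntegral.sum _ fun j _ ↦ ((hu_int.pow 2).pow 2).pow j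
  have half_eq : (2⁻¹ : K) = (u + u⁻¹) / 2 * (u * S) := by
    field_simp
    linear_combination -hS
  exact not_isIntegral_inv_two K (half_eq ▸ hx.mul (hu_int.mul hS_int))

theorem Complex.ofReal_cos_two_pi_div (n : ℕ) :
    ((Real.cos (2 * Real.pi / n) : ℝ) : ℂ) =
      (exp (2 * Real.pi * I / n) + (exp (2 * Real.pi * I / n))⁻¹) / 2 := by
  rw [ofReal_cos, cos, ← exp_neg]
  push_cast
  ring_nf

/-- Let `n > 2` be prime and `ζ² + (1 - cos(2π/n))ζ + 1 = 0`. Then `ζ` is not a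
root of unity. -/
theorem not_root_of_unity_prime (n : ℕ) (hp : n.Prime) (hn : 2 < n) (ζ : ℂ)
    (h : ζ ^ 2 + ((1 - Real.cos (2 * Real.pi / n) : ℝ) : ℂ) * ζ + 1 = 0) :
    ∀ m : ℕ, 0 < m → ζ ^ m ≠ 1 := by
  intro m hm hζm
  have hζ0 : ζ ≠ 0 := by rintro rfl; simp at h
  have hc : ((Real.cos (2 * Real.pi / n) : ℝ) : ℂ) = ζ + ζ⁻¹ + 1 := by
    rw [ofReal_sub, ofReal_one] at h
    field_simp
    linear_combination -h
  have hζ_int : IsIntegral ℤ ζ := .of_pow hm (hζm ▸ isIntegral_one)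
  have hζinv_int : IsIntegral ℤ ζ⁻¹ :=
    .of_pow hm (by rw [inv_pow, hζm, inv_one]; exact isIntegral_one)
  refine (isPrimitiveRoot_exp n (by omega)).not_isIntegral_add_inv_div_two
    (hp.odd_of_ne_two hn.ne') (by omega) ?_
  rw [← ofReal_cos_two_pi_div, hc]
  exact (hζ_int.add hζinv_int).add isIntegral_one
end
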